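/- (Corollary 3, single seller.) Let B be a nonempty finite index set of buying prosumers with parameters a_{i,b} > 0, b_{i,b} ∈ ℝ, P̲_{i,b} < 0, and let there be a single selling prosumer with parameters a_s > 0, b_s ∈ ℝ and power upper bound P̄_s > 0. Let λ̲ < λ̄ and k > 1. Suppose: λ̲ ≤ b_s < λ̲ + (λ̄−λ̲)/k < b_{i,b} ≤ λ̄ for every i ∈ B; (λ̄−λ̲)/(2 P̄_s) < a_s ≤ ((k−1)λ̲ + λ̄ − k b_s)/(−2(k−1) Σ_{i∈B} P̲_{i,b}); and a_{i,b} > (λ̄−λ̲)/(−2 P̲_{i,b}) for every i ∈ B. Then strict feasibility holds: 0 < P*_s < P̄_s for the seller and P̲_{i,b} < P*_{i,b} < 0 for every buyer i ∈ B, where λ* = (b_s/a_s + Σ_{i∈B} b_{i,b}/a_{i,b})/(1/a_s + Σ_{i∈B} 1/a_{i,b}), P*_s = (λ* − b_s)/(2 a_s), and P*_{i,b} = (λ* − b_{i,b})/(2 a_{i,b}). -/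

import Mathlib

/-!
At a price `x`, a prosumer with cost `a p² + b p` wants to trade `(x - b) / (2a)`, so the
net trading power `∑ (x - b) / (2a)` of the market is increasing in `x` and vanishes exactly at
the clearing price `λ*`. Strict feasibility therefore reduces to locating `λ*`:
the net power is negative at `b_s` (every buyer has a larger `b`), and positive at the
threshold `t = λ̲ + (λ̄ - λ̲) / k`, because the upper bound on `a_s` makes the seller supply at
least `(k - 1) / k · (-∑ P̲_{i,b})` while each buyer's demand exceeds `(k - 1) / k · P̲_{i,b}`.
Once `b_s < λ* < t`, the lower bounds on `a_s` and `a_{i,b}` keep every trading power within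
its bound, since all prices involved lie in an interval of length `λ̄ - λ̲`.
-/

open Finset

section MarketClearing

variable {ι : Type*} (B : Finset ι) (ab bb : ι → ℝ) (a_s b_s : ℝ)

noncomputable def clearingPrice : ℝ :=
  (b_s / a_s + ∑ i ∈ B, bb i / ab i) / (1 / a_s + ∑ i ∈ B, 1 / ab i)

noncomputable def netPower (x : ℝ) : ℝ :=
  (x - b_s) / (2 * a_s) + ∑ i ∈ B, (x - bb i) / (2 * ab i)

theorem two_mul_netPower (x : ℝ) :
    2 * netPower B ab bb a_s b_s x =
      x * (1 / a_s + ∑ i ∈ B, 1 / ab i) - (b_s / a_s + ∑ i ∈ B, bb i / ab i) := by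
  have hterm : ∀ a b : ℝ, 2 * ((x - b) / (2 * a)) = x * (1 / a) - b / a := fun a b => by
    rw [mul_div_assoc', mul_div_mul_left _ _ two_ne_zero]; ring
  simp only [netPower, mul_add, mul_sum, hterm, sum_sub_distrib]
  ring

variable {B ab bb a_s b_s}

theorem inv_weight_pos (hab : ∀ i ∈ B, 0 < ab i) (has : 0 < a_s) :
    0 < 1 / a_s + ∑ i ∈ B, 1 / ab i :=
  add_pos_of_pos_of_nonneg (one_div_pos.2 has)
    (sum_nonneg fun i hi => (one_div_pos.2 (hab i hi)).le)

theorem lt_clearingPrice_iff (hab : ∀ i ∈ B, 0 < ab i) (has : 0 < a_s) (x : ℝ) :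
    x < clearingPrice B ab bb a_s b_s ↔ netPower B ab bb a_s b_s x < 0 := by
  rw [clearingPrice, lt_div_iff₀ (inv_weight_pos hab has)]
  constructor <;> intro h <;> linarith [two_mul_netPower B ab bb a_s b_s x]

theorem clearingPrice_lt_iff (hab : ∀ i ∈ B, 0 < ab i) (has : 0 < a_s) (x : ℝ) :
    clearingPrice B ab bb a_s b_s < x ↔ 0 < netPower B ab bb a_s b_s x := by
  rw [clearingPrice, div_lt_iff₀ (inv_weight_pos hab has)]
  constructor <;> intro h <;> linarith [two_mul_netPower B ab bb a_s b_s x]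

theorem lt_clearingPrice_of_forall_lt (hB : B.Nonempty) (hab : ∀ i ∈ B, 0 < ab i)
    (has : 0 < a_s) (hbb : ∀ i ∈ B, b_s < bb i) :
    b_s < clearingPrice B ab bb a_s b_s := by
  rw [lt_clearingPrice_iff hab has, netPower, sub_self, zero_div, zero_add]
  exact sum_neg (fun i hi => div_neg_of_neg_of_pos (sub_neg.2 (hbb i hi))
    (mul_pos two_pos (hab i hi))) hB

end MarketClearing

theorem div_two_mul_lt_of_sub_le {a b x c P : ℝ} (ha0 : 0 < a) (hP : 0 < P)
    (ha : c / (2 * P) < a) (hx : x - b ≤ c) : (x - b) / (2 * a) < P := by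
  have hPa : c < 2 * P * a := (div_lt_iff₀' (by positivity)).1 ha
  rw [div_lt_iff₀ (by positivity)]
  linarith

theorem lt_div_two_mul_of_sub_le {a b x c P : ℝ} (ha0 : 0 < a) (hP : P < 0)
    (ha : c / (-2 * P) < a) (hx : b - x ≤ c) : P < (x - b) / (2 * a) := by
  have h := div_two_mul_lt_of_sub_le ha0 (neg_pos.2 hP) (by rwa [mul_neg, ← neg_mul]) hx
  rw [← neg_sub x b, neg_div] at h
  linarith

section PriceThreshold

variable {ι : Type*} {B : Finset ι} {ab bb Pb : ι → ℝ} {a_s b_s lamL lamU k : ℝ}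

theorem le_seller_power_at_threshold (hk : 1 < k) (has : 0 < a_s) (hSP : ∑ i ∈ B, Pb i < 0)
    (has_le : a_s ≤ ((k - 1) * lamL + lamU - k * b_s) / (-2 * (k - 1) * ∑ i ∈ B, Pb i)) :
    -((k - 1) / k * ∑ i ∈ B, Pb i) ≤ (lamL + (lamU - lamL) / k - b_s) / (2 * a_s) := by
  have hk0 : 0 < k := by linarith
  have hD : 0 < -2 * (k - 1) * ∑ i ∈ B, Pb i := by nlinarith
  have hkey := (le_div_iff₀ hD).1 has_le
  have hlhs : -((k - 1) / k * ∑ i ∈ B, Pb i) * (2 * a_s) =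
      a_s * (-2 * (k - 1) * ∑ i ∈ B, Pb i) / k := by
    field_simp
  have hrhs : lamL + (lamU - lamL) / k - b_s = ((k - 1) * lamL + lamU - k * b_s) / k := by
    field_simp
    ring
  rw [le_div_iff₀ (by positivity), hlhs, hrhs]
  exact div_le_div_of_nonneg_right hkey hk0.le

theorem lt_buyer_power_at_threshold {a b P : ℝ} (hk : 1 < k) (ha0 : 0 < a) (hP : P < 0)
    (ha : (lamU - lamL) / (-2 * P) < a) (hb : b ≤ lamU) :
    (k - 1) / k * P < (lamL + (lamU - lamL) / k - b) / (2 * a) := by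
  have hk' : 0 < (k - 1) / k := div_pos (by linarith) (by linarith)
  refine lt_div_two_mul_of_sub_le (c := (lamU - lamL) * ((k - 1) / k)) ha0
    (mul_neg_of_pos_of_neg hk' hP) ?_ ?_
  · rwa [show -2 * ((k - 1) / k * P) = -2 * P * ((k - 1) / k) by ring,
      mul_div_mul_right _ _ hk'.ne']
  · have : lamU - (lamL + (lamU - lamL) / k) = (lamU - lamL) * ((k - 1) / k) := by
      field_simp
      ring
    linarith

theorem clearingPrice_lt_threshold (hB : B.Nonempty) (hab : ∀ i ∈ B, 0 < ab i)
    (hPb : ∀ i ∈ B, Pb i < 0) (has : 0 < a_s) (hk : 1 < k)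
    (hbb : ∀ i ∈ B, bb i ≤ lamU)
    (has_le : a_s ≤ ((k - 1) * lamL + lamU - k * b_s) / (-2 * (k - 1) * ∑ i ∈ B, Pb i))
    (hab2 : ∀ i ∈ B, (lamU - lamL) / (-2 * Pb i) < ab i) :
    clearingPrice B ab bb a_s b_s < lamL + (lamU - lamL) / k := by
  rw [clearingPrice_lt_iff hab has, netPower]
  have hseller := le_seller_power_at_threshold hk has (sum_neg hPb hB) has_le
  have hbuyers : (k - 1) / k * ∑ i ∈ B, Pb i <
      ∑ i ∈ B, (lamL + (lamU - lamL) / k - bb i) / (2 * ab i) := by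
    rw [mul_sum]
    exact sum_lt_sum_of_nonempty hB fun i hi =>
      lt_buyer_power_at_threshold hk (hab i hi) (hPb i hi) (hab2 i hi) (hbb i hi)
  linarith

end PriceThreshold

/-- Corollary 3 (single seller): parameter selection rules that guarantee strict
feasibility when there is one selling prosumer and finitely many buying prosumers. -/
theorem coro3_single_seller {ι : Type*} (B : Finset ι) (hB : B.Nonempty)
    (ab bb Pb : ι → ℝ)
    (hab : ∀ i ∈ B, 0 < ab i) (hPb : ∀ i ∈ B, Pb i < 0)
    (a_s b_s P_s : ℝ) (has : 0 < a_s) (hPs : 0 < P_s)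
    (lamL lamU k : ℝ) (hlamLU : lamL < lamU) (hk : k > 1)
    (lam : ℝ)
    (hlam : lam = (b_s / a_s + ∑ i ∈ B, bb i / ab i) / (1 / a_s + ∑ i ∈ B, 1 / ab i))
    (hbs : lamL ≤ b_s ∧ b_s < lamL + (lamU - lamL) / k)
    (hbb : ∀ i ∈ B, lamL + (lamU - lamL) / k < bb i ∧ bb i ≤ lamU)
    (has2 : (lamU - lamL) / (2 * P_s) < a_s ∧
            a_s ≤ ((k - 1) * lamL + lamU - k * b_s) / (-2 * (k - 1) * ∑ i ∈ B, Pb i))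
    (hab2 : ∀ i ∈ B, ab i > (lamU - lamL) / (-2 * Pb i)) :
    (0 < (lam - b_s) / (2 * a_s) ∧ (lam - b_s) / (2 * a_s) < P_s) ∧
    (∀ i ∈ B, Pb i < (lam - bb i) / (2 * ab i) ∧ (lam - bb i) / (2 * ab i) < 0) := by
  obtain ⟨hbsL, hbst⟩ := hbs
  have hc : 0 < lamU - lamL := sub_pos.2 hlamLU
  have hlam_gt : b_s < lam := hlam ▸
    lt_clearingPrice_of_forall_lt hB hab has fun i hi => hbst.trans (hbb i hi).1
  have hlam_lt : lam < lamL + (lamU - lamL) / k := hlam ▸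
    clearingPrice_lt_threshold hB hab hPb has hk (fun i hi => (hbb i hi).2) has2.2 hab2
  have hdiv : (lamU - lamL) / k < lamU - lamL := div_lt_self hc hk
  refine ⟨⟨div_pos (sub_pos.2 hlam_gt) (by positivity),
    div_two_mul_lt_of_sub_le has hPs has2.1 (by linarith)⟩, fun i hi => ⟨?_, ?_⟩⟩
  · exact lt_div_two_mul_of_sub_le (hab i hi) (hPb i hi) (hab2 i hi) (by linarith [(hbb i hi).2])
  · exact div_neg_of_neg_of_pos (by linarith [(hbb i hi).1]) (mul_pos two_pos (hab i hi))
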